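/- Let μ be a compactly supported probability measure on ℝ and let s₀ be the unique holomorphic self-map of the upper half-plane satisfying s₀(z) = m_μ(z + s₀(z)). Then for every R > 0 there is a constant C (depending on R and μ) such that |s₀(z) - s₀(z')| ≤ C|z - z'|^{1/3} for all z, z' in the upper half-plane with |z|, |z'| ≤ R. -/

import Mathlib

open MeasureTheory

/-- The Stieltjes transform of a measure on ℝ. -/
noncomputable def stieltjes (μ : Measure ℝ) (z : ℂ) : ℂ := ∫ x, ((x : ℂ) - z)⁻¹ ∂μ

/-!
Differentiating the fixed-point equation gives `s₀' (1 - D) = D` with `D = ∫ (x - w)⁻² dμ` and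
`w = z + s₀ z`. Write `y = Im z`, `t = Im s₀ z`, `p = ∫ |x - w|⁻² dμ`, `q = ∫ |x - w|⁻⁴ dμ`.
The imaginary part of the fixed-point equation reads `t = (y + t) p`, so `‖D‖ ≤ p < 1`, while
`Re (1 - D) = 1 - p + 2 (y + t)² q` with `1 - p = y / (y + t)` and `q ≥ p²` (Jensen), so that
`2 (y + t)² q ≥ 2 t²`. Comparing `t` with `y^{1/3}` gives `Re (1 - D) ≥ y^{2/3} / (1 + y^{2/3})`,
hence `‖s₀'(z)‖ ≤ 1 + y^{-2/3}`.

A bound `‖f'(z)‖ ≤ K (Im z)^{α - 1}` with `0 < α ≤ 1` makes `f` `α`-Hölder: join `z` to `z'` by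
going up by `δ = ‖z - z'‖`, which costs at most `K ((y + δ)^α - y^α) / α ≤ K δ^α / α`, across at
height `≥ δ`, which costs at most `K δ^{α - 1} δ`, and back down.
-/

open Complex

theorem sq_integral_le_integral_sq {Ω : Type*} [MeasurableSpace Ω] {μ : Measure Ω}
    [IsProbabilityMeasure μ] {X : Ω → ℝ} (hX : MemLp X 2 μ) :
    (∫ ω, X ω ∂μ) ^ 2 ≤ ∫ ω, X ω ^ 2 ∂μ := by
  have h := ProbabilityTheory.variance_nonneg X μ
  rw [ProbabilityTheory.variance_eq_sub hX, sub_nonneg] at h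
  simpa using h

theorem sq_div_one_add_sq_le {r t p q : ℝ} (hr : 0 < r) (ht : 0 ≤ t)
    (hp : p * (r ^ 3 + t) = t) (hq : p ^ 2 ≤ q) :
    r ^ 2 / (1 + r ^ 2) ≤ 1 - p + 2 * (r ^ 3 + t) ^ 2 * q := by
  have hpos : 0 < r ^ 3 + t := by positivity
  have h1p : 1 - p = r ^ 3 / (r ^ 3 + t) := by
    rw [eq_div_iff hpos.ne']
    linarith
  rcases le_total t r with htr | hrt
  · calc r ^ 2 / (1 + r ^ 2) = r ^ 3 / (r ^ 3 + r) := by field_simp; ring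
      _ ≤ r ^ 3 / (r ^ 3 + t) := by gcongr
      _ ≤ 1 - p + 2 * (r ^ 3 + t) ^ 2 * q := by
        rw [h1p]
        exact le_add_of_nonneg_right (by nlinarith [sq_nonneg p])
  · calc r ^ 2 / (1 + r ^ 2) ≤ 2 * t ^ 2 := by
          rw [div_le_iff₀ (by positivity)]
          nlinarith [mul_le_mul hrt hrt hr.le ht]
      _ = 2 * (p * (r ^ 3 + t)) ^ 2 := by rw [hp]
      _ = 2 * (r ^ 3 + t) ^ 2 * p ^ 2 := by ring
      _ ≤ 2 * (r ^ 3 + t) ^ 2 * q := by gcongr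
      _ ≤ 1 - p + 2 * (r ^ 3 + t) ^ 2 * q := by
        rw [h1p]
        exact le_add_of_nonneg_left (by positivity)

theorem one_add_rpow_neg_le_mul_rpow_neg {y T a : ℝ} (hy : 0 < y) (hyT : y ≤ T) (ha : 0 ≤ a) :
    1 + y ^ (-a) ≤ (1 + T ^ a) * y ^ (-a) := by
  have h : 1 ≤ T ^ a * y ^ (-a) := by
    rw [Real.rpow_neg hy.le, ← div_eq_mul_inv, one_le_div (Real.rpow_pos_of_pos hy a)]
    exact Real.rpow_le_rpow hy.le hyT ha
  linarith

theorem Complex.norm_inv_sq (z : ℂ) : ‖(z ^ 2)⁻¹‖ = (normSq z)⁻¹ := by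
  rw [norm_inv, norm_pow, normSq_eq_norm_sq]

theorem Complex.re_inv_sq (z : ℂ) :
    ((z ^ 2)⁻¹).re = (normSq z)⁻¹ - 2 * z.im ^ 2 * (normSq z)⁻¹ ^ 2 := by
  rcases eq_or_ne z 0 with rfl | hz
  · simp
  have hN : z.re * z.re + z.im * z.im ≠ 0 := by rwa [← normSq_apply, normSq_eq_zero.ne]
  rw [inv_re, map_pow, sq z, mul_re, normSq_apply]
  field_simp
  ring

section HolderOfNormDerivLe

variable {E : Type*} [NormedAddCommGroup E] [NormedSpace ℂ E] {f : ℂ → E} {K α T : ℝ}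

theorem nonneg_of_norm_deriv_le_mul_im_rpow
    (hf' : ∀ z : ℂ, 0 < z.im → z.im ≤ T → ‖deriv f z‖ ≤ K * z.im ^ (α - 1))
    {z : ℂ} (hz : 0 < z.im) (hzT : z.im ≤ T) : 0 ≤ K :=
  nonneg_of_mul_nonneg_left ((norm_nonneg _).trans (hf' z hz hzT)) (Real.rpow_pos_of_pos hz _)

theorem norm_sub_le_of_le_im (hf : DifferentiableOn ℂ f {z | 0 < z.im})
    (hf' : ∀ z : ℂ, 0 < z.im → z.im ≤ T → ‖deriv f z‖ ≤ K * z.im ^ (α - 1))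
    (hα : α ≤ 1) {δ : ℝ} (hδ : 0 < δ) {z z' : ℂ} (hz : δ ≤ z.im) (hzT : z.im ≤ T)
    (hz' : δ ≤ z'.im) (hz'T : z'.im ≤ T) :
    ‖f z - f z'‖ ≤ K * δ ^ (α - 1) * ‖z - z'‖ := by
  have hK := nonneg_of_norm_deriv_le_mul_im_rpow hf' (hδ.trans_le hz) hzT
  refine ((convex_halfSpace_im_ge δ).inter
    (convex_halfSpace_im_le T)).norm_image_sub_le_of_norm_deriv_le
      (fun w hw => ?_) (fun w hw => ?_) ⟨hz', hz'T⟩ ⟨hz, hzT⟩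
  · exact hf.differentiableAt <|
      (isOpen_lt continuous_const continuous_im).mem_nhds (hδ.trans_le hw.1)
  · calc ‖deriv f w‖ ≤ K * w.im ^ (α - 1) := hf' w (hδ.trans_le hw.1) hw.2
      _ ≤ K * δ ^ (α - 1) :=
        mul_le_mul_of_nonneg_left (Real.rpow_le_rpow_of_nonpos hδ hw.1 (by linarith)) hK

theorem norm_add_ofReal_mul_I_sub_le (hf : DifferentiableOn ℂ f {z | 0 < z.im})
    (hf' : ∀ z : ℂ, 0 < z.im → z.im ≤ T → ‖deriv f z‖ ≤ K * z.im ^ (α - 1))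
    (hα₀ : 0 < α) (hα₁ : α ≤ 1) {z : ℂ} (hz : 0 < z.im) {δ : ℝ} (hδ : 0 ≤ δ)
    (hzT : z.im + δ ≤ T) :
    ‖f (z + δ * I) - f z‖ ≤ K / α * δ ^ α := by
  have hK := nonneg_of_norm_deriv_le_mul_im_rpow hf' hz (by linarith)
  have him : ∀ τ : ℝ, (z + τ * I).im = z.im + τ := by simp
  have hderiv : ∀ τ : ℝ, 0 ≤ τ →
      HasDerivAt (fun τ : ℝ => f (z + τ * I) - f z) (I • deriv f (z + τ * I)) τ := by
    intro τ hτ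
    have hline : HasDerivAt (fun τ : ℝ => z + τ * I) I τ := by
      simpa using ((hasDerivAt_id τ).ofReal_comp.mul_const I).const_add z
    refine (HasDerivAt.scomp τ (hf.differentiableAt ?_).hasDerivAt hline).sub_const _
    exact (isOpen_lt continuous_const continuous_im).mem_nhds (by simp; linarith)
  have hbdry : ∀ τ : ℝ, 0 ≤ τ → HasDerivAt (fun τ => K / α * ((z.im + τ) ^ α - z.im ^ α))
      (K * (z.im + τ) ^ (α - 1)) τ := by
    intro τ hτ
    refine (((((hasDerivAt_id τ).const_add z.im).rpow_const (p := α)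
      (Or.inl (by simp; linarith))).sub_const (z.im ^ α)).const_mul (K / α)).congr_deriv ?_
    field_simp
    simp
  have key := image_norm_le_of_norm_deriv_right_le_deriv_boundary'
    (f := fun τ : ℝ => f (z + τ * I) - f z) (a := 0) (b := δ)
    (fun τ hτ => (hderiv τ hτ.1).continuousAt.continuousWithinAt)
    (fun τ hτ => (hderiv τ hτ.1).hasDerivWithinAt) (by simp)
    (fun τ hτ => (hbdry τ hτ.1).continuousAt.continuousWithinAt)
    (fun τ hτ => (hbdry τ hτ.1).hasDerivWithinAt)
    (fun τ hτ => by
      rw [norm_smul, norm_I, one_mul, ← him τ]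
      exact hf' _ (by rw [him]; linarith [hτ.1]) (by rw [him]; linarith [hτ.2]))
    (Set.right_mem_Icc.2 hδ)
  calc ‖f (z + δ * I) - f z‖ ≤ K / α * ((z.im + δ) ^ α - z.im ^ α) := key
    _ ≤ K / α * δ ^ α := by
      gcongr
      linarith [Real.rpow_add_le_add_rpow hz.le hδ hα₀.le hα₁]

theorem norm_sub_le_mul_rpow_of_norm_deriv_le (hf : DifferentiableOn ℂ f {z | 0 < z.im})
    (hf' : ∀ z : ℂ, 0 < z.im → z.im ≤ T → ‖deriv f z‖ ≤ K * z.im ^ (α - 1))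
    (hα₀ : 0 < α) (hα₁ : α ≤ 1) {z z' : ℂ} (hz : 0 < z.im) (hz' : 0 < z'.im)
    (hzT : z.im + ‖z - z'‖ ≤ T) (hz'T : z'.im + ‖z - z'‖ ≤ T) :
    ‖f z - f z'‖ ≤ (2 / α + 1) * K * ‖z - z'‖ ^ α := by
  generalize hδ_def : ‖z - z'‖ = δ at hzT hz'T ⊢
  rcases (hδ_def ▸ norm_nonneg _ : 0 ≤ δ).eq_or_lt with hδ | hδ
  · rw [← hδ, Real.zero_rpow hα₀.ne', mul_zero, norm_le_zero_iff, sub_eq_zero]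
    exact congrArg f (sub_eq_zero.mp (norm_eq_zero.mp (hδ_def.trans hδ.symm)))
  have hup := norm_add_ofReal_mul_I_sub_le hf hf' hα₀ hα₁ hz hδ.le hzT
  have hup' := norm_add_ofReal_mul_I_sub_le hf hf' hα₀ hα₁ hz' hδ.le hz'T
  have hacross := norm_sub_le_of_le_im hf hf' hα₁ hδ (z := z + δ * I) (z' := z' + δ * I)
    (by simp [hz.le]) (by simpa using hzT) (by simp [hz'.le]) (by simpa using hz'T)
  rw [add_sub_add_right_eq_sub, hδ_def, Real.rpow_sub_one hδ.ne', mul_assoc,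
    div_mul_cancel₀ _ hδ.ne'] at hacross
  calc ‖f z - f z'‖
      = ‖-(f (z + δ * I) - f z) + (f (z + δ * I) - f (z' + δ * I))
          + (f (z' + δ * I) - f z')‖ := by
        congr 1; abel
    _ ≤ K / α * δ ^ α + K * δ ^ α + K / α * δ ^ α := by
        refine (norm_add₃_le).trans ?_
        rw [norm_neg]
        gcongr
    _ = (2 / α + 1) * K * δ ^ α := by ring

end HolderOfNormDerivLe

section StieltjesKernel

variable {μ : Measure ℝ} {w : ℂ}

theorem ofReal_sub_ne_zero_of_im_pos (hw : 0 < w.im) (x : ℝ) : (x : ℂ) - w ≠ 0 := by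
  intro h
  simpa [hw.ne'] using congrArg im h

theorem norm_inv_pow_ofReal_sub_le (hw : 0 < w.im) (n : ℕ) (x : ℝ) :
    ‖(((x : ℂ) - w) ^ n)⁻¹‖ ≤ (w.im ^ n)⁻¹ := by
  rw [norm_inv, norm_pow]
  refine inv_anti₀ (by positivity) (pow_le_pow_left₀ hw.le ?_ n)
  simpa [abs_of_pos hw] using abs_im_le_norm ((x : ℂ) - w)

theorem memLp_inv_pow_ofReal_sub [IsFiniteMeasure μ] (hw : 0 < w.im) (n : ℕ) (p : ENNReal) :
    MemLp (fun x : ℝ => (((x : ℂ) - w) ^ n)⁻¹) p μ :=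
  .of_bound (((continuous_ofReal.sub continuous_const).pow n).inv₀
      fun x => pow_ne_zero n (ofReal_sub_ne_zero_of_im_pos hw x)).aestronglyMeasurable
    _ (ae_of_all _ (norm_inv_pow_ofReal_sub_le hw n))

theorem integrable_inv_ofReal_sub [IsFiniteMeasure μ] (hw : 0 < w.im) :
    Integrable (fun x : ℝ => ((x : ℂ) - w)⁻¹) μ := by
  simpa using (memLp_inv_pow_ofReal_sub (μ := μ) hw 1 1).integrable le_rfl

theorem memLp_inv_normSq_ofReal_sub [IsFiniteMeasure μ] (hw : 0 < w.im) (p : ENNReal) :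
    MemLp (fun x : ℝ => (normSq ((x : ℂ) - w))⁻¹) p μ := by
  simpa only [norm_inv_sq] using (memLp_inv_pow_ofReal_sub (μ := μ) hw 2 p).norm

theorem hasDerivAt_stieltjes [IsFiniteMeasure μ] (hw : 0 < w.im) :
    HasDerivAt (stieltjes μ) (∫ x, (((x : ℂ) - w) ^ 2)⁻¹ ∂μ) w := by
  have hnhds : {w' : ℂ | w.im / 2 < w'.im} ∈ nhds w :=
    (isOpen_lt continuous_const continuous_im).mem_nhds (by simp; linarith)
  refine (hasDerivAt_integral_of_dominated_loc_of_deriv_le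
    (F := fun w' (x : ℝ) => ((x : ℂ) - w')⁻¹) (F' := fun w' (x : ℝ) => (((x : ℂ) - w') ^ 2)⁻¹)
    (bound := fun _ => ((w.im / 2) ^ 2)⁻¹)
    hnhds ?_ (integrable_inv_ofReal_sub hw)
    ((memLp_inv_pow_ofReal_sub hw 2 1).aestronglyMeasurable)
    (ae_of_all _ fun x w' hw' => ?_) (integrable_const _) (ae_of_all _ fun x w' hw' => ?_)).2
  · filter_upwards [hnhds] with w' hw'
    exact (integrable_inv_ofReal_sub (μ := μ) ((half_pos hw).trans hw')).aestronglyMeasurable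
  · have hw'pos : 0 < w'.im := (half_pos hw).trans hw'
    refine (norm_inv_pow_ofReal_sub_le hw'pos 2 x).trans (inv_anti₀ (by positivity) ?_)
    exact pow_le_pow_left₀ (by positivity) hw'.le 2
  · have h := ((hasDerivAt_id w').const_sub (x : ℂ)).inv
      (ofReal_sub_ne_zero_of_im_pos ((half_pos hw).trans hw') x)
    simp only [neg_neg, one_div] at h
    exact h

theorem im_stieltjes [IsFiniteMeasure μ] (hw : 0 < w.im) :
    (stieltjes μ w).im = w.im * ∫ x, (normSq ((x : ℂ) - w))⁻¹ ∂μ := by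
  rw [stieltjes, ← RCLike.im_to_complex, ← integral_im (integrable_inv_ofReal_sub hw),
    ← integral_const_mul]
  congr 1 with x
  simp [div_eq_mul_inv]

theorem re_integral_inv_sq_ofReal_sub [IsFiniteMeasure μ] (hw : 0 < w.im) :
    (∫ x, (((x : ℂ) - w) ^ 2)⁻¹ ∂μ).re = ∫ x, (normSq ((x : ℂ) - w))⁻¹ ∂μ
      - 2 * w.im ^ 2 * ∫ x, (normSq ((x : ℂ) - w))⁻¹ ^ 2 ∂μ := by
  rw [← RCLike.re_to_complex, ← integral_re ((memLp_inv_pow_ofReal_sub hw 2 1).integrable le_rfl),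
    ← integral_const_mul, ← integral_sub ((memLp_inv_normSq_ofReal_sub hw 1).integrable le_rfl)
      ((memLp_inv_normSq_ofReal_sub hw 2).integrable_sq.const_mul _)]
  congr 1 with x
  rw [RCLike.re_to_complex, re_inv_sq]
  simp

theorem norm_integral_inv_sq_ofReal_sub_le :
    ‖∫ x, (((x : ℂ) - w) ^ 2)⁻¹ ∂μ‖ ≤ ∫ x, (normSq ((x : ℂ) - w))⁻¹ ∂μ := by
  refine (norm_integral_le_integral_norm _).trans_eq ?_
  simp only [norm_inv_sq]

end StieltjesKernel

section FixedPoint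

variable {μ : Measure ℝ} [IsProbabilityMeasure μ] {s₀ : ℂ → ℂ} {z : ℂ}

theorem integral_inv_normSq_mul_eq_im
    (hs₀ : ∀ z : ℂ, 0 < z.im → 0 < (s₀ z).im ∧ s₀ z = stieltjes μ (z + s₀ z))
    (hz : 0 < z.im) :
    (∫ x, (normSq ((x : ℂ) - (z + s₀ z)))⁻¹ ∂μ) * (z.im + (s₀ z).im) = (s₀ z).im := by
  obtain ⟨ht, hfix⟩ := hs₀ z hz
  have hw : 0 < (z + s₀ z).im := by rw [add_im]; positivity
  conv_rhs => rw [hfix, im_stieltjes hw, add_im]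
  ring

theorem norm_integral_inv_sq_le_one
    (hs₀ : ∀ z : ℂ, 0 < z.im → 0 < (s₀ z).im ∧ s₀ z = stieltjes μ (z + s₀ z))
    (hz : 0 < z.im) :
    ‖∫ x, (((x : ℂ) - (z + s₀ z)) ^ 2)⁻¹ ∂μ‖ ≤ 1 := by
  have hp := integral_inv_normSq_mul_eq_im hs₀ hz
  have ht := (hs₀ z hz).1
  exact norm_integral_inv_sq_ofReal_sub_le.trans (by nlinarith)

theorem rpow_div_le_re_one_sub_integral_inv_sq
    (hs₀ : ∀ z : ℂ, 0 < z.im → 0 < (s₀ z).im ∧ s₀ z = stieltjes μ (z + s₀ z))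
    (hz : 0 < z.im) :
    z.im ^ (2 / 3 : ℝ) / (1 + z.im ^ (2 / 3 : ℝ))
      ≤ (1 - ∫ x, (((x : ℂ) - (z + s₀ z)) ^ 2)⁻¹ ∂μ).re := by
  have ht := (hs₀ z hz).1
  have hw : 0 < (z + s₀ z).im := by rw [add_im]; positivity
  set r := z.im ^ (1 / 3 : ℝ)
  have hr : 0 < r := Real.rpow_pos_of_pos hz _
  have hr3 : r ^ 3 = z.im := by
    rw [← Real.rpow_natCast, ← Real.rpow_mul hz.le]; norm_num
  have hr2 : r ^ 2 = z.im ^ (2 / 3 : ℝ) := by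
    rw [← Real.rpow_natCast, ← Real.rpow_mul hz.le]; norm_num
  have hp := integral_inv_normSq_mul_eq_im hs₀ hz
  rw [← hr3] at hp
  have key := sq_div_one_add_sq_le hr ht.le hp
    (sq_integral_le_integral_sq (memLp_inv_normSq_ofReal_sub hw 2))
  rw [sub_re, one_re, re_integral_inv_sq_ofReal_sub hw, add_im, ← hr2, ← hr3]
  linarith

theorem deriv_mul_one_sub_integral_inv_sq_eq
    (hs₀holo : DifferentiableOn ℂ s₀ {z : ℂ | 0 < z.im})
    (hs₀ : ∀ z : ℂ, 0 < z.im → 0 < (s₀ z).im ∧ s₀ z = stieltjes μ (z + s₀ z))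
    (hz : 0 < z.im) :
    deriv s₀ z * (1 - ∫ x, (((x : ℂ) - (z + s₀ z)) ^ 2)⁻¹ ∂μ)
      = ∫ x, (((x : ℂ) - (z + s₀ z)) ^ 2)⁻¹ ∂μ := by
  have hopen : IsOpen {z : ℂ | 0 < z.im} := isOpen_lt continuous_const continuous_im
  have hs : HasDerivAt s₀ (deriv s₀ z) z :=
    (hs₀holo.differentiableAt (hopen.mem_nhds hz)).hasDerivAt
  have hw : 0 < (z + s₀ z).im := by rw [add_im]; linarith [(hs₀ z hz).1]
  have hcomp := (hasDerivAt_stieltjes (μ := μ) hw).comp z ((hasDerivAt_id z).add hs)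
  have heq : s₀ =ᶠ[nhds z] stieltjes μ ∘ fun y => y + s₀ y := by
    filter_upwards [hopen.mem_nhds hz] with y hy
    exact (hs₀ y hy).2
  have hchain := hs.unique (hcomp.congr_of_eventuallyEq heq)
  linear_combination hchain

theorem norm_deriv_le_one_add_im_rpow
    (hs₀holo : DifferentiableOn ℂ s₀ {z : ℂ | 0 < z.im})
    (hs₀ : ∀ z : ℂ, 0 < z.im → 0 < (s₀ z).im ∧ s₀ z = stieltjes μ (z + s₀ z))
    (hz : 0 < z.im) :
    ‖deriv s₀ z‖ ≤ 1 + z.im ^ (-(2 / 3 : ℝ)) := by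
  set u := z.im ^ (2 / 3 : ℝ)
  have hu : 0 < u := Real.rpow_pos_of_pos hz _
  have key : ‖deriv s₀ z‖ * (u / (1 + u)) ≤ 1 :=
    calc ‖deriv s₀ z‖ * (u / (1 + u))
        ≤ ‖deriv s₀ z‖ * ‖1 - ∫ x, (((x : ℂ) - (z + s₀ z)) ^ 2)⁻¹ ∂μ‖ := by
          gcongr
          exact (rpow_div_le_re_one_sub_integral_inv_sq hs₀ hz).trans (re_le_norm _)
      _ = ‖∫ x, (((x : ℂ) - (z + s₀ z)) ^ 2)⁻¹ ∂μ‖ := by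
          rw [← norm_mul, deriv_mul_one_sub_integral_inv_sq_eq hs₀holo hs₀ hz]
      _ ≤ 1 := norm_integral_inv_sq_le_one hs₀ hz
  have hinv : 1 + z.im ^ (-(2 / 3 : ℝ)) = 1 / (u / (1 + u)) := by
    rw [Real.rpow_neg hz.le]
    field_simp
    ring
  rw [hinv, le_div_iff₀ (by positivity)]
  exact key

end FixedPoint

theorem holder_continuity_s0_general
    (μ : Measure ℝ) [IsProbabilityMeasure μ]
    (s₀ : ℂ → ℂ)
    (hs₀holo : DifferentiableOn ℂ s₀ {z : ℂ | 0 < z.im})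
    (hs₀ : ∀ z : ℂ, 0 < z.im → 0 < (s₀ z).im ∧ s₀ z = stieltjes μ (z + s₀ z))
    (R : ℝ) (hR : 0 < R) :
    ∃ C : ℝ, 0 < C ∧ ∀ z z' : ℂ, 0 < z.im → 0 < z'.im →
      ‖z‖ ≤ R → ‖z'‖ ≤ R →
      ‖s₀ z - s₀ z'‖ ≤ C * ‖z - z'‖ ^ ((1 : ℝ) / 3) := by
  have hderiv : ∀ w : ℂ, 0 < w.im → w.im ≤ 3 * R →
      ‖deriv s₀ w‖ ≤ (1 + (3 * R) ^ (2 / 3 : ℝ)) * w.im ^ ((1 : ℝ) / 3 - 1) := by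
    intro w hw hwR
    rw [show (1 : ℝ) / 3 - 1 = -(2 / 3) by norm_num]
    exact (norm_deriv_le_one_add_im_rpow hs₀holo hs₀ hw).trans
      (one_add_rpow_neg_le_mul_rpow_neg hw hwR (by norm_num))
  refine ⟨7 * (1 + (3 * R) ^ (2 / 3 : ℝ)), by positivity, fun z z' hz hz' hzR hz'R => ?_⟩
  have hdist : ‖z - z'‖ ≤ 2 * R := by linarith [norm_sub_le z z']
  have hzim : z.im ≤ R := (im_le_norm z).trans hzR
  have hz'im : z'.im ≤ R := (im_le_norm z').trans hz'R
  refine (norm_sub_le_mul_rpow_of_norm_deriv_le hs₀holo hderiv (by norm_num) (by norm_num)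
    hz hz' (by linarith) (by linarith)).trans_eq ?_
  norm_num

theorem holder_continuity_s0
    (μ : Measure ℝ) [IsProbabilityMeasure μ]
    (a b : ℝ) (hsupp : μ (Set.Icc a b)ᶜ = 0)
    (s₀ : ℂ → ℂ)
    (hs₀holo : DifferentiableOn ℂ s₀ {z : ℂ | 0 < z.im})
    (hs₀ : ∀ z : ℂ, 0 < z.im → 0 < (s₀ z).im ∧ s₀ z = stieltjes μ (z + s₀ z))
    (R : ℝ) (hR : 0 < R) :
    ∃ C : ℝ, 0 < C ∧ ∀ z z' : ℂ, 0 < z.im → 0 < z'.im →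
      ‖z‖ ≤ R → ‖z'‖ ≤ R →
      ‖s₀ z - s₀ z'‖ ≤ C * ‖z - z'‖ ^ ((1 : ℝ) / 3) :=
  holder_continuity_s0_general μ s₀ hs₀holo hs₀ R hR
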